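/- arXiv:0711.3759 — 4 statements merged into one kernel-verified Lean document; each statement's English description precedes it below -/
import Mathlib

section
/- (Theorem 1.2(1).) Fix t_0 ∈ ℂ. The following three conditions are equivalent: (i) there exist u_1, …, u_{n-1} ∈ ℂ, all nonzero, such that rank M^{X,n}_2(t_0, u) ≤ 2n (i.e. some point of the fibre over t_0 lying off all the coordinate sub-spans lies in Φ_2(X)); (ii) rank M^i_2(t_0) = 2 for every i = 1, …, n (i.e. the parameter-t_0 point p_i is a flex of C_i for every i); (iii) for every s ∈ {1,…,n} and all scalars u_i ∈ ℂ (i ≠ s), rank M^{X,s}_2(t_0, u) ≤ 2n (i.e. the whole fibre over t_0 is contained in Φ_2(X)). -/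
/-! The rows of `M^{X,s}_{k+1}(t,u)` other than the last one span the blockwise direct sum of
the osculating spaces `Osc^k(C_i)`, of dimension `(k+1) n` when each `M^i_k(t)` has full rank;
the last row is `∑ λ_i ι_i(a_i^{(k+1)}(t))` with `λ = (u, 1 at s)`. So the scroll point lies in
`Φ_{k+1}(X)` iff `λ_i a_i^{(k+1)}(t) ∈ Osc^k(C_i)` for all `i`, while `p_i` lies in `Φ_{k+1}(C_i)`
iff `a_i^{(k+1)}(t) ∈ Osc^k(C_i)`. For `k = 1` all three conditions therefore say
`a_i''(t_0) ∈ Osc^1(C_i)` for every `i`: in (i) the `λ_i` are nonzero, and in (iii) one may take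
`s = i`, where `λ_i = 1`. -/

open Matrix

/-- The `k`-th jet matrix `M^i_k(t)` of a parametrized curve. -/
noncomputable def curveJet (r : ℕ) (a : ℂ → Fin (r + 1) → ℂ) (k : ℕ) (t : ℂ) :
    Matrix (Fin (k + 1)) (Fin (r + 1)) ℂ :=
  Matrix.of fun l j => iteratedDeriv (l : ℕ) (fun s => a s j) t

/-- The `i`-th block inclusion `ι_i : ℂ^{r_i+1} → V`. -/
noncomputable def blockIncl {n : ℕ} (r : Fin n → ℕ) (i : Fin n)
    (v : Fin (r i + 1) → ℂ) : (Σ j : Fin n, Fin (r j + 1)) → ℂ :=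
  fun p => if h : p.1 = i then v (Fin.cast (by rw [h]) p.2) else 0

/-- The `k`-th jet matrix `M^{X,s}_k(t,u)` of the decomposable scroll. -/
noncomputable def scrollJet {n : ℕ} (r : Fin n → ℕ)
    (a : ∀ i : Fin n, ℂ → Fin (r i + 1) → ℂ) (k : ℕ) (s : Fin n) (t : ℂ)
    (u : Fin n → ℂ) :
    Matrix (Fin (k + 1) ⊕ ({i : Fin n // i ≠ s} × Fin k))
      (Σ j : Fin n, Fin (r j + 1)) ℂ :=
  Matrix.of fun row =>
    match row with
    | Sum.inl l =>
        blockIncl r s (curveJet (r s) (a s) k t l) +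
          ∑ i ∈ Finset.univ.filter (fun i => i ≠ s),
            u i • blockIncl r i (curveJet (r i) (a i) k t l)
    | Sum.inr q =>
        blockIncl r q.1.1 (curveJet (r q.1.1) (a q.1.1) k t q.2.castSucc)

/-- The row space of a matrix, i.e. the span of its rows. -/
noncomputable def rowSpace {m α : Type*} [Fintype m] (M : Matrix m α ℂ) : Submodule ℂ (α → ℂ) :=
  Submodule.span ℂ (Set.range fun i => M i)

theorem Submodule.finrank_sup_span_singleton_le_iff {K V : Type*} [DivisionRing K]
    [AddCommGroup V] [Module K V] [Module.Finite K V] (p : Submodule K V) (v : V) :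
    Module.finrank K ↥(p ⊔ K ∙ v) ≤ Module.finrank K p ↔ v ∈ p := by
  by_cases hv : v ∈ p
  · rw [sup_eq_left.2 ((Submodule.span_singleton_le_iff_mem v p).2 hv)]
    simp [hv]
  · simp [hv, Submodule.finrank_sup_span_singleton hv]

theorem Matrix.linearIndependent_row_of_rank_eq_card {m α K : Type*} [Field K] [Fintype m]
    [Fintype α] {M : Matrix m α K} (h : M.rank = Fintype.card m) : LinearIndependent K M.row := by
  rw [linearIndependent_iff_card_eq_finrank_span, Set.finrank, ← M.rank_eq_finrank_span_row, h]

lemma rank_eq_finrank_rowSpace {m α : Type*} [Fintype m] [Fintype α] (M : Matrix m α ℂ) :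
    M.rank = Module.finrank ℂ (rowSpace M) :=
  M.rank_eq_finrank_span_row

section Curve

variable {r : ℕ} (a : ℂ → Fin (r + 1) → ℂ) (k : ℕ) (t : ℂ)

lemma rowSpace_curveJet_succ :
    rowSpace (curveJet r a (k + 1) t) =
      rowSpace (curveJet r a k t) ⊔ ℂ ∙ curveJet r a (k + 1) t (Fin.last (k + 1)) := by
  have hrange : (Set.range fun l => curveJet r a (k + 1) t l) =
      insert (curveJet r a (k + 1) t (Fin.last (k + 1)))
        (Set.range fun l => curveJet r a k t l) := by
    ext x
    simp only [Set.mem_range, Set.mem_insert_iff, Fin.exists_fin_succ', or_comm, eq_comm]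
    rfl
  rw [rowSpace, rowSpace, hrange, Submodule.span_insert, sup_comm]

theorem rank_curveJet_succ_eq_iff (h : (curveJet r a k t).rank = k + 1) :
    (curveJet r a (k + 1) t).rank = k + 1 ↔
      curveJet r a (k + 1) t (Fin.last (k + 1)) ∈ rowSpace (curveJet r a k t) := by
  rw [rank_eq_finrank_rowSpace] at h ⊢
  rw [rowSpace_curveJet_succ, ← Submodule.finrank_sup_span_singleton_le_iff, h]
  exact ⟨le_of_eq, fun hle => hle.antisymm
    (h.symm.trans_le (Submodule.finrank_mono le_sup_left))⟩

end Curve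

section Scroll

variable {n : ℕ} (r : Fin n → ℕ)

abbrev blockEquiv : ((Σ j : Fin n, Fin (r j + 1)) → ℂ) ≃ₗ[ℂ] ∀ j : Fin n, Fin (r j + 1) → ℂ :=
  LinearEquiv.piCurry ℂ fun j (_ : Fin (r j + 1)) => ℂ

lemma blockIncl_eq_symm_single (i : Fin n) (v : Fin (r i + 1) → ℂ) :
    blockIncl r i v = (blockEquiv r).symm (Pi.single i v) := by
  funext ⟨j, c⟩
  by_cases h : j = i
  · subst h; simp [blockIncl, Sigma.uncurry]
  · simp [blockIncl, Sigma.uncurry, h]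

variable {ι : Fin n → Type*} (w : ∀ i, ι i → Fin (r i + 1) → ℂ)

def blockSpan : Submodule ℂ ((Σ j : Fin n, Fin (r j + 1)) → ℂ) :=
  Submodule.span ℂ (Set.range fun p : Σ i, ι i => blockIncl r p.1 (w p.1 p.2))

lemma blockSpan_eq_map_pi :
    blockSpan r w = (Submodule.pi Set.univ fun i => Submodule.span ℂ (Set.range (w i))).map
      ((blockEquiv r).symm : _ →ₗ[ℂ] _) := by
  rw [← Submodule.iSup_map_single]
  simp only [Submodule.map_span, Submodule.map_iSup, blockSpan, blockIncl_eq_symm_single]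
  rw [← Submodule.span_iUnion, Set.range_sigma_eq_iUnion_range]
  simp only [← Set.range_comp]
  rfl

lemma mem_blockSpan_iff (x : (Σ j : Fin n, Fin (r j + 1)) → ℂ) :
    x ∈ blockSpan r w ↔ ∀ i, blockEquiv r x i ∈ Submodule.span ℂ (Set.range (w i)) := by
  rw [blockSpan_eq_map_pi, Submodule.mem_map_equiv]
  simp [Submodule.mem_pi]

lemma finrank_blockSpan [∀ i, Fintype (ι i)] (hw : ∀ i, LinearIndependent ℂ (w i)) :
    Module.finrank ℂ (blockSpan r w) = ∑ i, Fintype.card (ι i) := by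
  have hind : LinearIndependent ℂ fun p : Σ i, ι i => blockIncl r p.1 (w p.1 p.2) := by
    simp only [blockIncl_eq_symm_single]
    exact (Pi.linearIndependent_single w hw).map' _ (blockEquiv r).symm.ker
  rw [blockSpan, finrank_span_eq_card hind, Fintype.card_sigma]

variable (a : ∀ i : Fin n, ℂ → Fin (r i + 1) → ℂ) (k : ℕ) (s : Fin n) (t : ℂ) (u : Fin n → ℂ)

lemma scrollJet_inl (l : Fin (k + 1)) :
    scrollJet r a k s t u (Sum.inl l) =
      ∑ i, Function.update u s 1 i • blockIncl r i (curveJet (r i) (a i) k t l) := by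
  rw [← Finset.add_sum_erase _ _ (Finset.mem_univ s), Function.update_self, one_smul,
    ← Finset.filter_ne', Finset.sum_congr rfl fun i hi => by
      rw [Function.update_of_ne (Finset.mem_filter.1 hi).2]]
  rfl

lemma blockEquiv_scrollJet_inl (l : Fin (k + 1)) (i : Fin n) :
    blockEquiv r (scrollJet r a k s t u (Sum.inl l)) i =
      Function.update u s 1 i • curveJet (r i) (a i) k t l := by
  simp only [scrollJet_inl, blockIncl_eq_symm_single, map_sum, map_smul,
    LinearEquiv.apply_symm_apply, Finset.sum_apply, Pi.smul_apply]
  rw [Finset.sum_eq_single i (fun j _ hji => by rw [Pi.single_eq_of_ne' hji, smul_zero])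
    (by simp), Pi.single_eq_same]

lemma rowSpace_scrollJet_succ :
    rowSpace (scrollJet r a (k + 1) s t u) =
      blockSpan r (fun i => (curveJet (r i) (a i) k t).row) ⊔
        ℂ ∙ scrollJet r a (k + 1) s t u (Sum.inl (Fin.last (k + 1))) := by
  have hblock i m : blockIncl r i (curveJet (r i) (a i) k t m) ∈
      blockSpan r fun i => (curveJet (r i) (a i) k t).row :=
    Submodule.subset_span ⟨⟨i, m⟩, rfl⟩
  have hrow row : scrollJet r a (k + 1) s t u row ∈ rowSpace (scrollJet r a (k + 1) s t u) :=
    Submodule.subset_span ⟨row, rfl⟩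
  apply le_antisymm
  · rw [rowSpace, Submodule.span_le]
    rintro _ ⟨l | ⟨⟨i, -⟩, m⟩, rfl⟩
    · induction l using Fin.lastCases with
      | last => exact Submodule.mem_sup_right (Submodule.mem_span_singleton_self _)
      | cast m =>
        dsimp only [SetLike.mem_coe]
        rw [scrollJet_inl r a (k + 1) s t u m.castSucc]
        exact Submodule.mem_sup_left
          (Submodule.sum_mem _ fun i _ => Submodule.smul_mem _ _ (hblock i m))
    · exact Submodule.mem_sup_left (hblock i m)
  · refine sup_le (Submodule.span_le.2 ?_) ((Submodule.span_singleton_le_iff_mem _ _).2 (hrow _))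
    rintro _ ⟨⟨i, m⟩, rfl⟩
    by_cases hi : i = s
    · subst hi
      have hrest : ∑ j ∈ Finset.univ.filter (· ≠ i),
          u j • blockIncl r j (curveJet (r j) (a j) (k + 1) t m.castSucc) ∈
            rowSpace (scrollJet r a (k + 1) i t u) :=
        Submodule.sum_mem _ fun j hj =>
          Submodule.smul_mem _ _ (hrow (Sum.inr ⟨⟨j, (Finset.mem_filter.1 hj).2⟩, m⟩))
      -- subtracting the `inr` rows from an `inl` row leaves its `s`-block
      show blockIncl r i (curveJet (r i) (a i) k t m) ∈ rowSpace _
      convert Submodule.sub_mem _ (hrow (Sum.inl m.castSucc)) hrest using 1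
      exact (add_sub_cancel_right _ _).symm
    · exact hrow (Sum.inr ⟨⟨i, hi⟩, m⟩)

theorem rank_scrollJet_succ_le_iff (h : ∀ i, (curveJet (r i) (a i) k t).rank = k + 1) :
    (scrollJet r a (k + 1) s t u).rank ≤ (k + 1) * n ↔
      ∀ i, Function.update u s 1 i • curveJet (r i) (a i) (k + 1) t (Fin.last (k + 1)) ∈
        rowSpace (curveJet (r i) (a i) k t) := by
  have hind i : LinearIndependent ℂ (curveJet (r i) (a i) k t).row :=
    Matrix.linearIndependent_row_of_rank_eq_card ((h i).trans (Fintype.card_fin _).symm)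
  have hB :
      Module.finrank ℂ (blockSpan r fun i => (curveJet (r i) (a i) k t).row) = (k + 1) * n := by
    simp [finrank_blockSpan r _ hind, mul_comm]
  rw [rank_eq_finrank_rowSpace, rowSpace_scrollJet_succ, ← hB,
    Submodule.finrank_sup_span_singleton_le_iff, mem_blockSpan_iff]
  simp only [blockEquiv_scrollJet_inl]
  rfl

end Scroll

theorem statement1_general {n : ℕ} (r : Fin n → ℕ)
    (a : ∀ i : Fin n, ℂ → Fin (r i + 1) → ℂ)
    (hnd : ∀ i t, (curveJet (r i) (a i) 1 t).rank = 2)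
    (sn : Fin n) (t0 : ℂ) :
    ((∃ u : Fin n → ℂ, (∀ i, i ≠ sn → u i ≠ 0) ∧
        (scrollJet r a 2 sn t0 u).rank ≤ 2 * n) ↔
      (∀ i, (curveJet (r i) (a i) 2 t0).rank = 2)) ∧
    ((∀ i, (curveJet (r i) (a i) 2 t0).rank = 2) ↔
      (∀ (s : Fin n) (u : Fin n → ℂ), (scrollJet r a 2 s t0 u).rank ≤ 2 * n)) := by
  have flex i := rank_curveJet_succ_eq_iff (a i) 1 t0 (hnd i t0)
  have scroll s u := rank_scrollJet_succ_le_iff r a 1 s t0 u fun i => hnd i t0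
  simp only [flex, scroll]
  refine ⟨⟨?_, fun h => ⟨fun _ => 1, fun _ _ => one_ne_zero,
      fun i => Submodule.smul_mem _ _ (h i)⟩⟩,
    fun h s u i => Submodule.smul_mem _ _ (h i), fun h i => by simpa using h i 0 i⟩
  rintro ⟨u, hu, h⟩ i
  by_cases hi : i = sn
  · subst hi
    simpa using h i
  · exact (Submodule.smul_mem_iff _ (hu i hi)).1 (by simpa [Function.update_of_ne hi] using h i)

/-- Theorem 1.2(1): for a decomposable scroll and a fixed fibre
(over `t0`), TFAE: (i) some point of the fibre off all coordinate sub-spans is a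
flex of `X`; (ii) every `p_i` is a flex of `C_i`; (iii) the whole fibre is
contained in `Φ₂(X)`. -/
theorem statement1 {n : ℕ} (hn : 2 ≤ n) (r : Fin n → ℕ) (hr : ∀ i, 1 ≤ r i)
    (a : ∀ i : Fin n, ℂ → Fin (r i + 1) → ℂ)
    (hent : ∀ i j, Differentiable ℂ fun t => a i t j)
    (hnd : ∀ i t, (curveJet (r i) (a i) 1 t).rank = 2)
    (sn : Fin n) (hsn : (sn : ℕ) = n - 1) (t0 : ℂ) :
    ((∃ u : Fin n → ℂ, (∀ i, i ≠ sn → u i ≠ 0) ∧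
        (scrollJet r a 2 sn t0 u).rank ≤ 2 * n) ↔
      (∀ i, (curveJet (r i) (a i) 2 t0).rank = 2)) ∧
    ((∀ i, (curveJet (r i) (a i) 2 t0).rank = 2) ↔
      (∀ (s : Fin n) (u : Fin n → ℂ), (scrollJet r a 2 s t0 u).rank ≤ 2 * n)) :=
  statement1_general r a hnd sn t0
end

section
/- (Theorem 1.2(2).) Fix t_0 ∈ ℂ and s ∈ {1,…,n}. Then rank M^{X,s}_2(t_0, 0) ≤ 2n if and only if rank M^s_2(t_0) = 2; that is, the point p_s of C_s at parameter t_0, regarded as a point of the scroll X, lies in Φ_2(X) if and only if p_s is a flex of C_s. -/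
/-!
At `u = 0` every row of the scroll jet lies in a single block of `V`: the first `k + 2` rows
are the `(k+1)`-jet of `C_s` placed in block `s`, and the remaining ones are the `k`-jets of the
other curves, each in its own block. Hence the row space is the product of the row spaces of
these jets and the rank is additive over the blocks. For `k = 1` nondegeneracy makes every
block `i ≠ s` contribute exactly `2`, so the scroll jet has rank at most `2n` exactly when
`rank M^s_2(t₀) ≤ 2`, and `rank M^s_2(t₀) ≥ rank M^s_1(t₀) = 2` always.
-/

open Matrix

open Module Submodule Finset

theorem finrank_pi_univ {K ι : Type*} [Field K] [Fintype ι] {φ : ι → Type*}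
    [∀ i, AddCommGroup (φ i)] [∀ i, Module K (φ i)] [∀ i, FiniteDimensional K (φ i)]
    (p : ∀ i, Submodule K (φ i)) :
    finrank K (pi Set.univ p) = ∑ i, finrank K (p i) := by
  let e : pi Set.univ p ≃ₗ[K] ∀ i, p i :=
    { toFun := fun x i => ⟨x.1 i, x.2 i trivial⟩
      invFun := fun f => ⟨fun i => f i, fun i _ => (f i).2⟩
      map_add' := fun _ _ => rfl
      map_smul' := fun _ _ => rfl
      left_inv := fun _ => rfl
      right_inv := fun _ => rfl }
  rw [e.finrank_eq, finrank_pi_fintype]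

theorem span_iUnion_image_single {R ι : Type*} [Semiring R] [Finite ι] [DecidableEq ι]
    {φ : ι → Type*} [∀ i, AddCommMonoid (φ i)] [∀ i, Module R (φ i)] (S : ∀ i, Set (φ i)) :
    span R (⋃ i, Pi.single i '' S i) = pi Set.univ fun i => span R (S i) := by
  rw [span_iUnion, ← iSup_map_single]
  refine congrArg iSup (funext fun i => ?_)
  rw [map_span]
  rfl

theorem curry_blockIncl {n : ℕ} (r : Fin n → ℕ) (i : Fin n) (v : Fin (r i + 1) → ℂ) :
    Sigma.curry (blockIncl r i v) = (Pi.single i v : ∀ j, Fin (r j + 1) → ℂ) := by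
  funext j x
  by_cases h : j = i
  · subst h
    simp [Sigma.curry, blockIncl]
  · simp [Sigma.curry, blockIncl, h]

theorem curveJet_rank_le_succ (r : ℕ) (a : ℂ → Fin (r + 1) → ℂ) (k : ℕ) (t : ℂ) :
    (curveJet r a k t).rank ≤ (curveJet r a (k + 1) t).rank :=
  rank_submatrix_le (curveJet r a (k + 1) t) Fin.castSucc id

section ScrollJet

variable {n : ℕ} (r : Fin n → ℕ) (a : ∀ i : Fin n, ℂ → Fin (r i + 1) → ℂ)

theorem curry_scrollJet_zero_inl (k : ℕ) (s : Fin n) (t : ℂ) (l : Fin (k + 1)) :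
    Sigma.curry (scrollJet r a k s t (fun _ => 0) (Sum.inl l)) =
      (Pi.single s (curveJet (r s) (a s) k t l) : ∀ j, Fin (r j + 1) → ℂ) := by
  rw [← curry_blockIncl]
  congr 1
  simp only [scrollJet, zero_smul, sum_const_zero, add_zero]
  rfl

theorem rank_scrollJet_zero (k : ℕ) (s : Fin n) (t : ℂ) :
    (scrollJet r a (k + 1) s t fun _ => 0).rank =
      (curveJet (r s) (a s) (k + 1) t).rank +
        ∑ i ∈ univ.erase s, (curveJet (r i) (a i) k t).rank := by
  let S : ∀ i, Set (Fin (r i + 1) → ℂ) := fun i =>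
    if i = s then Set.range (curveJet (r i) (a i) (k + 1) t).row
    else Set.range (curveJet (r i) (a i) k t).row
  let E := LinearEquiv.piCurry ℂ fun (j : Fin n) (_ : Fin (r j + 1)) => ℂ
  have hrows :
      E '' Set.range (scrollJet r a (k + 1) s t fun _ => 0).row = ⋃ i, Pi.single i '' S i := by
    rw [← Set.range_comp]
    ext x
    simp only [Set.mem_range, Set.mem_iUnion, Set.mem_image, Function.comp_apply]
    constructor
    · rintro ⟨l | ⟨⟨i, hi⟩, m⟩, rfl⟩
      · refine ⟨s, _, ?_, (curry_scrollJet_zero_inl r a _ s t l).symm⟩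
        simp only [S, ↓reduceIte]
        exact ⟨l, rfl⟩
      · refine ⟨i, _, ?_, (curry_blockIncl r i _).symm⟩
        simp only [S, hi, ↓reduceIte]
        exact ⟨m, rfl⟩
    · rintro ⟨i, v, hv, rfl⟩
      by_cases hi : i = s
      · subst hi
        simp only [S, ↓reduceIte] at hv
        obtain ⟨l, rfl⟩ := hv
        exact ⟨Sum.inl l, curry_scrollJet_zero_inl r a _ i t l⟩
      · simp only [S, hi, ↓reduceIte] at hv
        obtain ⟨m, rfl⟩ := hv
        exact ⟨Sum.inr (⟨i, hi⟩, m), curry_blockIncl r i _⟩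
  have hblock : ∀ i, finrank ℂ (span ℂ (S i)) =
      if i = s then (curveJet (r s) (a s) (k + 1) t).rank else (curveJet (r i) (a i) k t).rank := by
    intro i
    by_cases h : i = s
    · subst h
      rw [if_pos rfl, rank_eq_finrank_span_row, ← show S i = _ from if_pos rfl]
    · rw [if_neg h, rank_eq_finrank_span_row, ← show S i = _ from if_neg h]
  rw [rank_eq_finrank_span_row, ← E.finrank_map_eq, map_span, LinearEquiv.coe_coe, hrows,
    span_iUnion_image_single, finrank_pi_univ, ← add_sum_erase _ _ (mem_univ s), hblock, if_pos rfl]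
  congr 1
  exact sum_congr rfl fun i hi => by rw [hblock, if_neg (ne_of_mem_erase hi)]

end ScrollJet

theorem statement2_general {n : ℕ} (r : Fin n → ℕ)
    (a : ∀ i : Fin n, ℂ → Fin (r i + 1) → ℂ)
    (hnd : ∀ i t, (curveJet (r i) (a i) 1 t).rank = 2)
    (t0 : ℂ) (s : Fin n) :
    (scrollJet r a 2 s t0 (fun _ => 0)).rank ≤ 2 * n ↔
      (curveJet (r s) (a s) 2 t0).rank = 2 := by
  show (scrollJet r a (1 + 1) s t0 _).rank ≤ 2 * n ↔ (curveJet (r s) (a s) (1 + 1) t0).rank = 2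
  have htwo_le : 2 ≤ (curveJet (r s) (a s) (1 + 1) t0).rank :=
    (hnd s t0).symm.le.trans (curveJet_rank_le_succ (r s) (a s) 1 t0)
  rw [rank_scrollJet_zero, sum_congr rfl fun i _ => hnd i t0, sum_const,
    card_erase_of_mem (mem_univ s), card_univ, Fintype.card_fin, smul_eq_mul]
  have hn : 0 < n := s.pos
  omega

/-- Theorem 1.2(2): the point `p_s` of `C_s` at parameter `t0`,
regarded as a point of the scroll `X`, lies in `Φ₂(X)` if and only if `p_s` is a
flex of `C_s`. -/
theorem statement2 {n : ℕ} (hn : 2 ≤ n) (r : Fin n → ℕ) (hr : ∀ i, 1 ≤ r i)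
    (a : ∀ i : Fin n, ℂ → Fin (r i + 1) → ℂ)
    (hent : ∀ i j, Differentiable ℂ fun t => a i t j)
    (hnd : ∀ i t, (curveJet (r i) (a i) 1 t).rank = 2)
    (t0 : ℂ) (s : Fin n) :
    (scrollJet r a 2 s t0 (fun _ => 0)).rank ≤ 2 * n ↔
      (curveJet (r s) (a s) 2 t0).rank = 2 :=
  statement2_general r a hnd t0 s
end

section
/- (Proposition 2.3.) Fix t_0 ∈ ℂ, s ∈ {1,…,n} and an integer k ≥ 2. Assume that for every i ≠ s the row space of M^i_k(t_0) equals the row space of M^i_{k-1}(t_0) (i.e. Osc^k of C_i at the parameter-t_0 point coincides with Osc^{k−1}; this is the condition the paper derives from p_i ∈ Φ_k(C_i)). Then for all scalars u_i ∈ ℂ (i ≠ s), the row space of M^{X,s}_k(t_0, u) equals the direct sum ι_s(row space of M^s_k(t_0)) ⊕ ⨁_{i≠s} ι_i(row space of M^i_{k-1}(t_0)). -/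
/-!
The rows of `M^{X,s}_k(t₀,u)` beyond the first `k+1` are exactly the vectors `ι_i(row m of M^i_{k-1}(t₀))`,
`i ≠ s`; call their span `W`. The hypothesis puts every `ι_i(row l of M^i_k(t₀))`, `i ≠ s`, in `W`, so each of
the first `k+1` rows differs from `ι_s(row l of M^s_k(t₀))` by an element of `W`, and adding elements of `W` to
generators does not change a span that already contains `W`.
-/

open Matrix

open Submodule Set

theorem Submodule.span_range_add_union_of_mem_span {R M ι : Type*} [Ring R] [AddCommGroup M]
    [Module R M] {A w : ι → M} {B : Set M} (hw : ∀ l, w l ∈ span R B) :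
    span R (range (fun l => A l + w l) ∪ B) = span R (range A ∪ B) := by
  have hB : ∀ {C : Set M} l, w l ∈ span R (C ∪ B) := fun l => span_mono subset_union_right (hw l)
  apply le_antisymm <;> refine span_le.2 ?_ <;> rintro _ (⟨l, rfl⟩ | hb)
  · exact add_mem (subset_span (Or.inl ⟨l, rfl⟩)) (hB l)
  · exact subset_span (Or.inr hb)
  · have hsum : A l + w l ∈ span R (range (fun l => A l + w l) ∪ B) :=
      subset_span (Or.inl ⟨l, rfl⟩)
    simpa using sub_mem hsum (hB l)
  · exact subset_span (Or.inr hb)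

noncomputable def blockInclL {n : ℕ} (r : Fin n → ℕ) (i : Fin n) :
    (Fin (r i + 1) → ℂ) →ₗ[ℂ] ((Σ j : Fin n, Fin (r j + 1)) → ℂ) where
  toFun := blockIncl r i
  map_add' v w := by funext p; by_cases h : p.1 = i <;> simp [blockIncl, h]
  map_smul' c v := by funext p; by_cases h : p.1 = i <;> simp [blockIncl, h]

theorem map_blockInclL_rowSpace {n : ℕ} (r : Fin n → ℕ) (i : Fin n) {m : Type*} [Fintype m]
    (M : Matrix m (Fin (r i + 1)) ℂ) :
    (rowSpace M).map (blockInclL r i) = span ℂ (range fun l => blockIncl r i (M l)) := by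
  rw [rowSpace, map_span, ← range_comp]
  rfl

theorem curveJet_castSucc (r : ℕ) (a : ℂ → Fin (r + 1) → ℂ) (k : ℕ) (t : ℂ) (m : Fin (k + 1)) :
    curveJet r a (k + 1) t m.castSucc = curveJet r a k t m := by
  funext j
  simp [curveJet]

def lowerJetRows {n : ℕ} (r : Fin n → ℕ) (a : ∀ i : Fin n, ℂ → Fin (r i + 1) → ℂ) (s : Fin n)
    (k : ℕ) (t : ℂ) : Set ((Σ j : Fin n, Fin (r j + 1)) → ℂ) :=
  ⋃ i : {i : Fin n // i ≠ s}, range fun m : Fin (k + 1) =>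
    blockIncl r i.1 (curveJet (r i.1) (a i.1) k t m)

section Scroll

variable {n : ℕ} (r : Fin n → ℕ) (a : ∀ i : Fin n, ℂ → Fin (r i + 1) → ℂ) (s : Fin n) (k : ℕ)
  (t : ℂ)

theorem rowSpace_scrollJet_succ_s8 (u : Fin n → ℂ) :
    rowSpace (scrollJet r a (k + 1) s t u) =
      span ℂ (range (fun l => blockIncl r s (curveJet (r s) (a s) (k + 1) t l) +
          ∑ i ∈ Finset.univ.filter (fun i => i ≠ s),
            u i • blockIncl r i (curveJet (r i) (a i) (k + 1) t l)) ∪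
        lowerJetRows r a s k t) := by
  have hrows : (fun row => scrollJet r a (k + 1) s t u row) = Sum.elim
      (fun l => blockIncl r s (curveJet (r s) (a s) (k + 1) t l) +
        ∑ i ∈ Finset.univ.filter (fun i => i ≠ s),
          u i • blockIncl r i (curveJet (r i) (a i) (k + 1) t l))
      (fun q => blockIncl r q.1.1 (curveJet (r q.1.1) (a q.1.1) k t q.2)) := by
    funext row
    rcases row with l | q
    · rfl
    · exact congrArg (blockIncl r q.1.1) (curveJet_castSucc _ _ k t q.2)
  rw [rowSpace, hrows, Sum.elim_range]
  congr 2
  ext x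
  simp [lowerJetRows]

theorem blockIncl_curveJet_mem_span_lowerJetRows {i : Fin n} (hi : i ≠ s)
    (hosc : rowSpace (curveJet (r i) (a i) (k + 1) t) = rowSpace (curveJet (r i) (a i) k t))
    (l : Fin (k + 2)) :
    blockIncl r i (curveJet (r i) (a i) (k + 1) t l) ∈ span ℂ (lowerJetRows r a s k t) := by
  have hrow : curveJet (r i) (a i) (k + 1) t l ∈ rowSpace (curveJet (r i) (a i) k t) := by
    rw [← hosc]
    exact subset_span ⟨l, rfl⟩
  have himage : blockInclL r i (curveJet (r i) (a i) (k + 1) t l) ∈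
      (rowSpace (curveJet (r i) (a i) k t)).map (blockInclL r i) :=
    mem_map_of_mem hrow
  rw [map_blockInclL_rowSpace] at himage
  exact span_mono (fun x hx => mem_iUnion.2 ⟨⟨i, hi⟩, hx⟩) himage

end Scroll

theorem statement8_general {n : ℕ} (r : Fin n → ℕ)
    (a : ∀ i : Fin n, ℂ → Fin (r i + 1) → ℂ)
    (t0 : ℂ) (s : Fin n) (k : ℕ) (hk : 2 ≤ k)
    (hosc : ∀ i, i ≠ s →
      rowSpace (curveJet (r i) (a i) k t0) =
        rowSpace (curveJet (r i) (a i) (k - 1) t0))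
    (u : Fin n → ℂ) :
    rowSpace (scrollJet r a k s t0 u) =
      Submodule.span ℂ
        ((Set.range fun l : Fin (k + 1) =>
            blockIncl r s (curveJet (r s) (a s) k t0 l)) ∪
          ⋃ i : {i : Fin n // i ≠ s},
            Set.range fun m : Fin (k - 1 + 1) =>
              blockIncl r i.1 (curveJet (r i.1) (a i.1) (k - 1) t0 m)) := by
  obtain ⟨k, rfl⟩ : ∃ k', k = k' + 1 := ⟨k - 1, by omega⟩
  rw [Nat.add_sub_cancel] at hosc ⊢
  rw [rowSpace_scrollJet_succ_s8, span_range_add_union_of_mem_span]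
  · rfl
  · exact fun l => sum_mem fun i hi => smul_mem _ _ <|
      blockIncl_curveJet_mem_span_lowerJetRows r a s k t0 (Finset.mem_filter.1 hi).2
        (hosc i (Finset.mem_filter.1 hi).2) l

/-- Proposition 2.3: if for every `i ≠ s` the `k`-th and `(k-1)`-th
osculating spaces of `C_i` at the parameter-`t0` point coincide, then for all
scalars `u`, the row space of `M^{X,s}_k(t0,u)` equals the (direct) sum of
`ι_s(row space of M^s_k(t0))` and the `ι_i(row space of M^i_{k-1}(t0))`, `i ≠ s`. -/
theorem statement8 {n : ℕ} (hn : 2 ≤ n) (r : Fin n → ℕ) (hr : ∀ i, 1 ≤ r i)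
    (a : ∀ i : Fin n, ℂ → Fin (r i + 1) → ℂ)
    (hent : ∀ i j, Differentiable ℂ fun t => a i t j)
    (hnd : ∀ i t, (curveJet (r i) (a i) 1 t).rank = 2)
    (t0 : ℂ) (s : Fin n) (k : ℕ) (hk : 2 ≤ k)
    (hosc : ∀ i, i ≠ s →
      rowSpace (curveJet (r i) (a i) k t0) =
        rowSpace (curveJet (r i) (a i) (k - 1) t0))
    (u : Fin n → ℂ) :
    rowSpace (scrollJet r a k s t0 u) =
      Submodule.span ℂ
        ((Set.range fun l : Fin (k + 1) =>
            blockIncl r s (curveJet (r s) (a s) k t0 l)) ∪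
          ⋃ i : {i : Fin n // i ≠ s},
            Set.range fun m : Fin (k - 1 + 1) =>
              blockIncl r i.1 (curveJet (r i.1) (a i.1) (k - 1) t0 m)) :=
  statement8_general r a t0 s k hk hosc u
end

section
/- (Proposition 2.4, first part.) Fix t_0 ∈ ℂ, an integer k ≥ 2, and a nonempty subset F ⊆ {1,…,n} such that rank M^i_k(t_0) ≤ k for every i ∈ F (i.e. p_i ∈ Φ_k(C_i) for i ∈ F). Then every point of the fibre over t_0 supported on F lies in Φ_k(X): for every s ∈ F and all scalars u_i ∈ ℂ (i ≠ s) with u_i = 0 whenever i ∉ F, one has rank M^{X,s}_k(t_0, u) ≤ nk. (Geometrically: the linear span ⟨p_i : i ∈ F⟩ inside the fibre is contained in Φ_k(X).) -/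
/-!
For `i ∈ F` the whole row space of `M^i_k(t₀)` has dimension at most `k`, and for every `i` the
first `k` rows of `M^i_k(t₀)` span a space of dimension at most `k`. Since `u_i = 0` for `i ∉ F`,
every row of `M^{X,s}_k(t₀, u)` lies in the sum of the block images of these `n` spaces, which has
dimension at most `n k`.
-/

open Matrix

open Module

theorem Submodule.finrank_finset_sup_le_sum {K V ι : Type*} [DivisionRing K] [AddCommGroup V]
    [Module K V] [FiniteDimensional K V] [DecidableEq ι] (t : Finset ι) (W : ι → Submodule K V) :
    finrank K ↥(t.sup W) ≤ ∑ i ∈ t, finrank K (W i) := by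
  induction t using Finset.induction with
  | empty => simp
  | insert _ _ hi ih =>
    rw [Finset.sup_insert, Finset.sum_insert hi]
    exact (Submodule.finrank_add_le_finrank_add_finrank _ _).trans (by gcongr)

theorem Matrix.rank_le_finrank_of_row_mem {K m n : Type*} [Field K] [Finite m] [Fintype n]
    (A : Matrix m n K) {T : Submodule K (n → K)} (hA : ∀ i, A i ∈ T) :
    A.rank ≤ finrank K T := by
  rw [A.rank_eq_finrank_span_row]
  exact Submodule.finrank_mono (Submodule.span_le.2 <| Set.range_subset_iff.2 hA)

theorem Matrix.finrank_span_row_castSucc_le {K n : Type*} [Field K] {k : ℕ}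
    (A : Matrix (Fin (k + 1)) n K) :
    finrank K (Submodule.span K (Set.range fun m : Fin k => A m.castSucc)) ≤ k := by
  simpa [Set.finrank] using finrank_range_le_card (R := K) fun m : Fin k => A m.castSucc

noncomputable def blockInclLM {n : ℕ} (r : Fin n → ℕ) (i : Fin n) :
    (Fin (r i + 1) → ℂ) →ₗ[ℂ] (Σ j : Fin n, Fin (r j + 1)) → ℂ where
  toFun := blockIncl r i
  map_add' v w := by funext p; simp only [blockIncl, Pi.add_apply]; split <;> simp
  map_smul' c v := by
    funext p; simp only [blockIncl, Pi.smul_apply, RingHom.id_apply]; split <;> simp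

theorem finrank_sup_map_blockInclLM_le {n : ℕ} (r : Fin n → ℕ) {k : ℕ}
    (U : ∀ i, Submodule ℂ (Fin (r i + 1) → ℂ)) (hU : ∀ i, finrank ℂ (U i) ≤ k) :
    finrank ℂ ↥(Finset.univ.sup fun i => (U i).map (blockInclLM r i)) ≤ n * k := by
  classical
  calc _ ≤ ∑ i, finrank ℂ ((U i).map (blockInclLM r i)) :=
        Submodule.finrank_finset_sup_le_sum _ _
    _ ≤ ∑ i, finrank ℂ (U i) := by gcongr; exact Submodule.finrank_map_le _ _
    _ ≤ ∑ _i : Fin n, k := by gcongr; exact hU _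
    _ = n * k := by simp

theorem scrollJet_rank_le_of_rows_mem {n : ℕ} (r : Fin n → ℕ)
    (a : ∀ i : Fin n, ℂ → Fin (r i + 1) → ℂ) (k : ℕ) (s : Fin n) (t : ℂ) (u : Fin n → ℂ)
    (U : ∀ i, Submodule ℂ (Fin (r i + 1) → ℂ)) (hU : ∀ i, finrank ℂ (U i) ≤ k)
    (hlow : ∀ i (m : Fin k), curveJet (r i) (a i) k t m.castSucc ∈ U i)
    (hs : ∀ l, curveJet (r s) (a s) k t l ∈ U s)
    (hu : ∀ i, i ≠ s → u i ≠ 0 → ∀ l, curveJet (r i) (a i) k t l ∈ U i) :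
    (scrollJet r a k s t u).rank ≤ n * k := by
  classical
  set T := Finset.univ.sup fun i => (U i).map (blockInclLM r i)
  have hT : ∀ i, ∀ v ∈ U i, blockIncl r i v ∈ T := fun i v hv =>
    Finset.le_sup (f := fun i => (U i).map (blockInclLM r i)) (Finset.mem_univ i)
      (Submodule.mem_map_of_mem hv)
  refine (rank_le_finrank_of_row_mem _ (T := T) ?_).trans (finrank_sup_map_blockInclLM_le r U hU)
  rintro (l | ⟨⟨i, -⟩, m⟩)
  · refine add_mem (hT s _ (hs l)) (Submodule.sum_mem _ fun i hi => ?_)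
    by_cases hui : u i = 0
    · simp [hui]
    · exact Submodule.smul_mem _ _ (hT i _ (hu i (Finset.mem_filter.1 hi).2 hui l))
  · exact hT i _ (hlow i m)

theorem statement9_general {n : ℕ} (r : Fin n → ℕ)
    (a : ∀ i : Fin n, ℂ → Fin (r i + 1) → ℂ)
    (t0 : ℂ) (k : ℕ)
    (F : Finset (Fin n))
    (hflex : ∀ i ∈ F, (curveJet (r i) (a i) k t0).rank ≤ k)
    (s : Fin n) (hs : s ∈ F) (u : Fin n → ℂ)
    (hu : ∀ i, i ≠ s → i ∉ F → u i = 0) :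
    (scrollJet r a k s t0 u).rank ≤ n * k := by
  have hU : ∀ i, ∃ U : Submodule ℂ (Fin (r i + 1) → ℂ), finrank ℂ U ≤ k ∧
      (∀ m : Fin k, curveJet (r i) (a i) k t0 m.castSucc ∈ U) ∧
      (i ∈ F → ∀ l, curveJet (r i) (a i) k t0 l ∈ U) := fun i => by
    by_cases hi : i ∈ F
    · refine ⟨_, (rank_eq_finrank_span_row _).symm.trans_le (hflex i hi),
        fun m => Submodule.subset_span ⟨_, rfl⟩, fun _ l => Submodule.subset_span ⟨l, rfl⟩⟩
    · exact ⟨_, finrank_span_row_castSucc_le _, fun m => Submodule.subset_span ⟨m, rfl⟩,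
        fun h => absurd h hi⟩
  choose U hUk hlow hfull using hU
  exact scrollJet_rank_le_of_rows_mem r a k s t0 u U hUk hlow (hfull s hs)
    fun i his hui => hfull i (not_imp_comm.1 (hu i his) hui)

/-- Proposition 2.4, first part: if `p_i ∈ Φ_k(C_i)` for every `i` in
a nonempty set `F`, then every point of the fibre over `t0` supported on `F` lies in
`Φ_k(X)`. -/
theorem statement9 {n : ℕ} (hn : 2 ≤ n) (r : Fin n → ℕ) (hr : ∀ i, 1 ≤ r i)
    (a : ∀ i : Fin n, ℂ → Fin (r i + 1) → ℂ)
    (hent : ∀ i j, Differentiable ℂ fun t => a i t j)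
    (hnd : ∀ i t, (curveJet (r i) (a i) 1 t).rank = 2)
    (t0 : ℂ) (k : ℕ) (hk : 2 ≤ k)
    (F : Finset (Fin n)) (hF : F.Nonempty)
    (hflex : ∀ i ∈ F, (curveJet (r i) (a i) k t0).rank ≤ k)
    (s : Fin n) (hs : s ∈ F) (u : Fin n → ℂ)
    (hu : ∀ i, i ≠ s → i ∉ F → u i = 0) :
    (scrollJet r a k s t0 u).rank ≤ n * k :=
  statement9_general r a t0 k F hflex s hs u hu
end
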